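/- Preservation under layered refinement: Let Δ^{n+k} be an (n+k)-layered signature with restriction Δⁿ = Δ^{n+k}[n], let M be an n-layered model of Δⁿ and N an (n+k)-layered model of Δ^{n+k}, and suppose N is a layered refinement of M (M ⊑_l N), i.e., there is a total n-layered simulation S from M to the n-restriction N_n. Then for every positive strict formula φ ∈ SFm⁺(n,Δⁿ), every pair of tuples related by S, and all w_r ∈ W'_r for r ∈ {n+1,…,n+k}, if M, w_0,…,w_n ⊨_n φ then N, w'_0,…,w'_n, w_{n+1},…,w_{n+k} ⊨_{n+k} φ. -/
import Mathlib


/-! Layered hybrid logic (R. Neves et al., "A hybrid modal logic for k-layered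
transition systems"): signatures, formulas, models, satisfaction. -/

/-- An `n`-layered signature: a family of (disjoint) sets of propositional
symbols and nominals for each level. -/
structure LSig : Type 1 where
  P : ℕ → Type
  N : ℕ → Type

/-- Agreement of two dependent tuples on components `0,…,k`. -/
def agreeUpTo {W : ℕ → Type} (k : ℕ) (w v : ∀ r, W r) : Prop :=
  ∀ r, r ≤ k → w r = v r

theorem agreeUpTo_refl {W : ℕ → Type} (k : ℕ) (w : ∀ r, W r) : agreeUpTo k w w :=
  fun _ _ => rfl

theorem agreeUpTo_symm {W : ℕ → Type} {k : ℕ} {w v : ∀ r, W r}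
    (h : agreeUpTo k w v) : agreeUpTo k v w := fun r hr => (h r hr).symm

theorem agreeUpTo_trans {W : ℕ → Type} {k : ℕ} {w v u : ∀ r, W r}
    (h₁ : agreeUpTo k w v) (h₂ : agreeUpTo k v u) : agreeUpTo k w u :=
  fun r hr => (h₁ r hr).trans (h₂ r hr)

theorem agreeUpTo_mono {W : ℕ → Type} {j k : ℕ} (hjk : j ≤ k) {w v : ∀ r, W r}
    (h : agreeUpTo k w v) : agreeUpTo j w v := fun r hr => h r (hr.trans hjk)

mutual
  /-- The formulas `Fm_k(Δⁿ)` of level `k`. -/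
  inductive LForm (S : LSig) : ℕ → Type
    | base {k : ℕ} : LBasic S k → LForm S (k + 1)
    | nom {k : ℕ} : S.N k → LForm S k
    | prp {k : ℕ} : S.P k → LForm S k
    | neg {k : ℕ} : LForm S k → LForm S k
    | and {k : ℕ} : LForm S k → LForm S k → LForm S k
    | at_ {k : ℕ} : S.N k → LForm S k → LForm S k
    | dia {k : ℕ} : LForm S k → LForm S k
  /-- The basic formulas `φ^b_k` of level `k`. -/
  inductive LBasic (S : LSig) : ℕ → Type
    | nom {k : ℕ} : S.N k → LBasic S k
    | prp {k : ℕ} : S.P k → LBasic S k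
    | lift {k : ℕ} : LBasic S k → LBasic S (k + 1)
    | at_ {k : ℕ} : S.N k → LForm S k → LBasic S k
    | dia {k : ℕ} : LForm S k → LBasic S k
end

/-- An `n`-layered model.  Tuples `(w_0,…,w_k)` are represented as dependent
functions `w : ∀ r, W r` of which only the components `0,…,k` are relevant;
all predicates of the model are required to depend only on the relevant
components (the `_ext` fields).  `Dtop` is the top-level domain predicate
`Dⁿ ⊆ W_0 × ⋯ × W_n`; the lower-level predicates `D_k` are its restrictions
(see `LModel.D`).  `R k` is `R_k ⊆ D_k × D_k`, `VP k p` encodes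
`w_k ∈ V_k^Prop(p, w_0,…,w_{k-1})` and `VN k i` is `V_k^Nom(i)`.
`cover` states `W_k = {v | D_k(w_0,…,w_{k-1},v) for some w's}`. -/
structure LModel (n : ℕ) (S : LSig) where
  W : ℕ → Type
  Dtop : (∀ r, W r) → Prop
  R : ℕ → (∀ r, W r) → (∀ r, W r) → Prop
  VP : ∀ k, S.P k → (∀ r, W r) → Prop
  VN : ∀ k, S.N k → W k
  Dtop_ext : ∀ w w', agreeUpTo n w w' → Dtop w → Dtop w'
  R_sub : ∀ k, k ≤ n → ∀ w v, R k w v →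
    (∃ u, agreeUpTo k u w ∧ Dtop u) ∧ (∃ u, agreeUpTo k u v ∧ Dtop u)
  R_ext : ∀ k, k ≤ n → ∀ w w' v v',
    agreeUpTo k w w' → agreeUpTo k v v' → R k w v → R k w' v'
  VP_ext : ∀ k, k ≤ n → ∀ (p : S.P k) w w', agreeUpTo k w w' → VP k p w → VP k p w'
  cover : ∀ k, k ≤ n → ∀ x : W k, ∃ w, (∃ u, agreeUpTo k u w ∧ Dtop u) ∧ w k = x

/-- `D_k`, the restriction of the domain predicate to the components `0,…,k`. -/
def LModel.D {n : ℕ} {S : LSig} (M : LModel n S) (k : ℕ) (w : ∀ r, M.W r) : Prop :=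
  ∃ u, agreeUpTo k u w ∧ M.Dtop u

theorem LModel.D_restrict {n : ℕ} {S : LSig} (M : LModel n S) {j k : ℕ}
    (hjk : j ≤ k) (w : ∀ r, M.W r) :
    (∃ u, agreeUpTo j u w ∧ M.D k u) ↔ M.D j w := by
  constructor
  · rintro ⟨u, hu, t, ht, htop⟩
    exact ⟨t, agreeUpTo_trans (agreeUpTo_mono hjk ht) hu, htop⟩
  · rintro ⟨t, ht, htop⟩
    exact ⟨t, ht, t, agreeUpTo_refl _ _, htop⟩

/-- The `k`-restriction `M_k` of an `n`-layered model (`k ≤ n`). -/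
def LModel.restrict {n : ℕ} {S : LSig} (M : LModel n S) (k : ℕ) (hk : k ≤ n) :
    LModel k S where
  W := M.W
  Dtop := M.D k
  R := M.R
  VP := M.VP
  VN := M.VN
  Dtop_ext := fun w w' h hD => by
    obtain ⟨u, hu, htop⟩ := hD
    exact ⟨u, agreeUpTo_trans hu h, htop⟩
  R_sub := fun j hj w v hR =>
    ⟨(M.D_restrict hj w).mpr (M.R_sub j (hj.trans hk) w v hR).1,
     (M.D_restrict hj v).mpr (M.R_sub j (hj.trans hk) w v hR).2⟩
  R_ext := fun j hj => M.R_ext j (hj.trans hk)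
  VP_ext := fun j hj => M.VP_ext j (hj.trans hk)
  cover := fun j hj x => by
    obtain ⟨w, hD, hx⟩ := M.cover j (hj.trans hk) x
    exact ⟨w, (M.D_restrict hj w).mpr hD, hx⟩

mutual
  /-- Satisfaction `M_k, w_0,…,w_k ⊨_k φ` (only the components `0,…,k` of `w`
  are relevant). -/
  def LSat {n : ℕ} {S : LSig} (M : LModel n S) :
      ∀ (k : ℕ), LForm S k → (∀ r, M.W r) → Prop
    | _, .base b, w => LBSat M _ b w
    | k, .nom i, w => w k = M.VN k i ∧ M.D k (Function.update w k (M.VN k i))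
    | k, .prp p, w => M.VP k p w
    | k, .neg φ, w => ¬ LSat M k φ w
    | k, .and φ ψ, w => LSat M k φ w ∧ LSat M k ψ w
    | k, .at_ i φ, w => M.D k (Function.update w k (M.VN k i)) ∧
        LSat M k φ (Function.update w k (M.VN k i))
    | k, .dia φ, w => ∃ v, M.R k w v ∧ LSat M k φ v
  /-- Satisfaction of basic formulas. -/
  def LBSat {n : ℕ} {S : LSig} (M : LModel n S) :
      ∀ (k : ℕ), LBasic S k → (∀ r, M.W r) → Prop
    | k, .nom i, w => w k = M.VN k i ∧ M.D k (Function.update w k (M.VN k i))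
    | k, .prp p, w => M.VP k p w
    | _, .lift b, w => LBSat M _ b w
    | k, .at_ i φ, w => M.D k (Function.update w k (M.VN k i)) ∧
        LSat M k φ (Function.update w k (M.VN k i))
    | k, .dia φ, w => ∃ v, M.R k w v ∧ LSat M k φ v
end
/-- Strict `k`-layered formulas `SFm(k,Δⁿ)`: built only from level-`k`
atoms, `¬`, `∧`, `@` and `◇_k` (no embedded lower-level basic formulas). -/
def LForm.Strict {S : LSig} : ∀ {k : ℕ}, LForm S k → Prop
  | _, .base _ => False
  | _, .nom _ => True
  | _, .prp _ => True
  | _, .neg φ => φ.Strict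
  | _, .and φ ψ => φ.Strict ∧ ψ.Strict
  | _, .at_ _ φ => φ.Strict
  | _, .dia φ => φ.Strict

mutual
  /-- Positive formulas: no negation. -/
  def LForm.Positive {S : LSig} : ∀ {k : ℕ}, LForm S k → Prop
    | _, .base b => LBasic.Positive b
    | _, .nom _ => True
    | _, .prp _ => True
    | _, .neg _ => False
    | _, .and φ ψ => φ.Positive ∧ ψ.Positive
    | _, .at_ _ φ => φ.Positive
    | _, .dia φ => φ.Positive
  /-- Positive basic formulas: no negation. -/
  def LBasic.Positive {S : LSig} : ∀ {k : ℕ}, LBasic S k → Prop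
    | _, .nom _ => True
    | _, .prp _ => True
    | _, .lift b => b.Positive
    | _, .at_ _ φ => LForm.Positive φ
    | _, .dia φ => LForm.Positive φ
end

/-- An `n`-layered bisimulation `B = (B_k ⊆ D_k × D'_k)_{k ≤ n}` between two
`n`-layered models. -/
structure IsLayeredBisim {n : ℕ} {S : LSig} (M M' : LModel n S)
    (B : ∀ k, (∀ r, M.W r) → (∀ r, M'.W r) → Prop) : Prop where
  dom : ∀ k, k ≤ n → ∀ w w', B k w w' → M.D k w ∧ M'.D k w'
  ext : ∀ k, k ≤ n → ∀ w v w' v', agreeUpTo k w v → agreeUpTo k w' v' →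
    B k w w' → B k v v'
  atom_prop : ∀ k, k ≤ n → ∀ w w', B k w w' → ∀ p : S.P k,
    (M.VP k p w ↔ M'.VP k p w')
  atom_nom_rel : ∀ k, k ≤ n → ∀ w w', B k w w' → ∀ i : S.N k,
    B k (Function.update w k (M.VN k i)) (Function.update w' k (M'.VN k i))
  atom_nom_name : ∀ k, k ≤ n → ∀ w w', B k w w' → ∀ i : S.N k,
    ((w k = M.VN k i ∧ M.D k (Function.update w k (M.VN k i))) ↔
     (w' k = M'.VN k i ∧ M'.D k (Function.update w' k (M'.VN k i))))
  zig : ∀ k, k ≤ n → ∀ w w', B k w w' → ∀ v, M.R k w v →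
    ∃ v', M'.R k w' v' ∧ B k v v'
  zag : ∀ k, k ≤ n → ∀ w w', B k w w' → ∀ v', M'.R k w' v' →
    ∃ v, M.R k w v ∧ B k v v'

/-- An `n`-layered simulation `S = (S_k ⊆ D_k × D'_k)_{k ≤ n}` from `M` to `M'`. -/
structure IsLayeredSim {n : ℕ} {S : LSig} (M M' : LModel n S)
    (Srel : ∀ k, (∀ r, M.W r) → (∀ r, M'.W r) → Prop) : Prop where
  dom : ∀ k, k ≤ n → ∀ w w', Srel k w w' → M.D k w ∧ M'.D k w'
  ext : ∀ k, k ≤ n → ∀ w v w' v', agreeUpTo k w v → agreeUpTo k w' v' →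
    Srel k w w' → Srel k v v'
  atom_prop : ∀ k, k ≤ n → ∀ w w', Srel k w w' → ∀ p : S.P k,
    M.VP k p w → M'.VP k p w'
  atom_nom_rel : ∀ k, k ≤ n → ∀ w w', Srel k w w' → ∀ i : S.N k,
    Srel k (Function.update w k (M.VN k i)) (Function.update w' k (M'.VN k i))
  atom_nom_name : ∀ k, k ≤ n → ∀ w w', Srel k w w' → ∀ i : S.N k,
    (w k = M.VN k i ∧ M.D k (Function.update w k (M.VN k i))) →
    (w' k = M'.VN k i ∧ M'.D k (Function.update w' k (M'.VN k i)))
  zig : ∀ k, k ≤ n → ∀ w w', Srel k w w' → ∀ v, M.R k w v →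
    ∃ v', M'.R k w' v' ∧ Srel k v v'

/-- A model is `n`-hierarchical when each `R_{k+1}` restricted to the first
`k+1` components on each side coincides with `R_k`. -/
def IsHierarchical {n : ℕ} {S : LSig} (M : LModel n S) : Prop :=
  ∀ k, k + 1 ≤ n → ∀ w v,
    ((∃ w₁ v₁, agreeUpTo k w w₁ ∧ agreeUpTo k v v₁ ∧ M.R (k + 1) w₁ v₁) ↔
      M.R k w v)

/-- Restriction `B|_k` of a relation on top-level tuples to the first `k+1`
components on each side. -/
def relRestrict {W W' : ℕ → Type} (B : (∀ r, W r) → (∀ r, W' r) → Prop)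
    (k : ℕ) : (∀ r, W r) → (∀ r, W' r) → Prop :=
  fun w w' => ∃ v v', agreeUpTo k v w ∧ agreeUpTo k v' w' ∧ B v v'

/-- An `n`-hierarchical bisimulation `B ⊆ D_n × D'_n` between two
`n`-hierarchical models. -/
structure IsHierBisim {n : ℕ} {S : LSig} (M M' : LModel n S)
    (B : (∀ r, M.W r) → (∀ r, M'.W r) → Prop) : Prop where
  dom : ∀ w w', B w w' → M.D n w ∧ M'.D n w'
  ext : ∀ w v w' v', agreeUpTo n w v → agreeUpTo n w' v' → B w w' → B v v'
  atom_prop : ∀ w w', B w w' → ∀ k, k ≤ n → ∀ p : S.P k,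
    (M.VP k p w ↔ M'.VP k p w')
  atom_nom_rel : ∀ w w', B w w' → ∀ k, k ≤ n → ∀ i : S.N k,
    relRestrict B k (Function.update w k (M.VN k i))
      (Function.update w' k (M'.VN k i))
  atom_nom_name : ∀ w w', B w w' → ∀ k, k ≤ n → ∀ i : S.N k,
    ((w k = M.VN k i ∧ M.D k (Function.update w k (M.VN k i))) ↔
     (w' k = M'.VN k i ∧ M'.D k (Function.update w' k (M'.VN k i))))
  zig : ∀ w w', B w w' → ∀ v, M.R n w v → ∃ v', M'.R n w' v' ∧ B v v'
  zag : ∀ w w', B w w' → ∀ v', M'.R n w' v' → ∃ v, M.R n w v ∧ B v v'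

/-- An `n`-hierarchical simulation `S ⊆ D_n × D'_n` from `M` to `M'`. -/
structure IsHierSim {n : ℕ} {S : LSig} (M M' : LModel n S)
    (Srel : (∀ r, M.W r) → (∀ r, M'.W r) → Prop) : Prop where
  dom : ∀ w w', Srel w w' → M.D n w ∧ M'.D n w'
  ext : ∀ w v w' v', agreeUpTo n w v → agreeUpTo n w' v' → Srel w w' → Srel v v'
  atom_prop : ∀ w w', Srel w w' → ∀ k, k ≤ n → ∀ p : S.P k,
    M.VP k p w → M'.VP k p w'
  atom_nom_rel : ∀ w w', Srel w w' → ∀ k, k ≤ n → ∀ i : S.N k,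
    relRestrict Srel k (Function.update w k (M.VN k i))
      (Function.update w' k (M'.VN k i))
  atom_nom_name : ∀ w w', Srel w w' → ∀ k, k ≤ n → ∀ i : S.N k,
    (w k = M.VN k i ∧ M.D k (Function.update w k (M.VN k i))) →
    (w' k = M'.VN k i ∧ M'.D k (Function.update w' k (M'.VN k i)))
  zig : ∀ w w', Srel w w' → ∀ v, M.R n w v → ∃ v', M'.R n w' v' ∧ Srel v v'

/-- Iterated inclusion of basic formulas into higher levels. -/
def LBasic.liftN {S : LSig} {k : ℕ} (b : LBasic S k) : ∀ j : ℕ, LBasic S (k + j)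
  | 0 => b
  | j + 1 => (b.liftN j).lift

/-- Inclusion of basic formulas of level `k` into basic formulas of level
`m ≥ k`. -/
def LBasic.liftTo {S : LSig} {k m : ℕ} (h : k ≤ m) (b : LBasic S k) :
    LBasic S m :=
  (Nat.add_sub_cancel' h) ▸ b.liftN (m - k)

/-- A basic formula of level `k` is in particular a formula of level `k`. -/
def LBasic.toForm {S : LSig} : ∀ {k : ℕ}, LBasic S k → LForm S k
  | _, .nom i => .nom i
  | _, .prp p => .prp p
  | _, .lift b => .base b
  | _, .at_ i φ => .at_ i φ
  | _, .dia φ => .dia φ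

theorem LModel.D_ext {n : ℕ} {S : LSig} (M : LModel n S) {j : ℕ}
    {x y : ∀ r, M.W r} (h : agreeUpTo j x y) (hD : M.D j x) : M.D j y := by
  obtain ⟨t, ht, htop⟩ := hD
  exact ⟨t, agreeUpTo_trans ht h, htop⟩

theorem LModel.restrict_D {n : ℕ} {S : LSig} (M : LModel n S) {m : ℕ}
    (hm : m ≤ n) {j : ℕ} (hj : j ≤ m) (x : ∀ r, M.W r) :
    (M.restrict m hm).D j x ↔ M.D j x := by
  constructor
  · rintro ⟨u, hu, t, ht, htop⟩
    exact ⟨t, agreeUpTo_trans (agreeUpTo_mono hj ht) hu, htop⟩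
  · rintro ⟨t, ht, htop⟩
    exact ⟨t, ht, t, agreeUpTo_refl _ _, htop⟩

theorem agreeUpTo_update {W : ℕ → Type} {k : ℕ} {w v : ∀ r, W r}
    (h : agreeUpTo k w v) (a : W k) :
    agreeUpTo k (Function.update w k a) (Function.update v k a) := by
  intro r hr
  by_cases hrk : r = k
  · subst hrk; simp
  · rw [Function.update_of_ne hrk, Function.update_of_ne hrk]
    exact h r hr

theorem preservation_aux {n k : ℕ} {S : LSig}
    (M : LModel n S) (N : LModel (n + k) S)
    (Srel : ∀ j, (∀ r, M.W r) → (∀ r, N.W r) → Prop)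
    (hS : IsLayeredSim M (N.restrict n (Nat.le_add_right n k)) Srel) :
    ∀ (φ : LForm S n), φ.Strict → φ.Positive →
      ∀ w w', Srel n w w' → LSat M n φ w →
      ∀ u : ∀ r, N.W r, agreeUpTo n w' u → LSat N n φ u
  | .base _, hstrict, _, _, _, _, _, _, _ => hstrict.elim
  | .neg _, _, hpos, _, _, _, _, _, _ => hpos.elim
  | .nom i, _, _, w, w', hww', hsat, u, hagree => by
      have h := hS.atom_nom_name n (le_refl n) w w' hww' i hsat
      refine ⟨(hagree n (le_refl n)).symm.trans h.1, ?_⟩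
      have hD := (N.restrict_D (Nat.le_add_right n k) (le_refl n) _).mp h.2
      exact N.D_ext (agreeUpTo_update hagree _) hD
  | .prp p, _, _, w, w', hww', hsat, u, hagree => by
      have h := hS.atom_prop n (le_refl n) w w' hww' p hsat
      exact N.VP_ext n (Nat.le_add_right n k) p w' u hagree h
  | .and φ ψ, hstrict, hpos, w, w', hww', hsat, u, hagree =>
      ⟨preservation_aux M N Srel hS φ hstrict.1 hpos.1 w w' hww' hsat.1 u hagree,
       preservation_aux M N Srel hS ψ hstrict.2 hpos.2 w w' hww' hsat.2 u hagree⟩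
  | .at_ i φ, hstrict, hpos, w, w', hww', hsat, u, hagree => by
      have hrel := hS.atom_nom_rel n (le_refl n) w w' hww' i
      have hD := (N.restrict_D (Nat.le_add_right n k) (le_refl n) _).mp
        (hS.dom n (le_refl n) _ _ hrel).2
      have hag : agreeUpTo n (Function.update w' n (N.VN n i))
          (Function.update u n (N.VN n i)) := agreeUpTo_update hagree _
      exact ⟨N.D_ext hag hD,
        preservation_aux M N Srel hS φ hstrict hpos _ _ hrel hsat.2 _ hag⟩
  | .dia φ, hstrict, hpos, w, w', hww', hsat, u, hagree => by
      obtain ⟨v, hRv, hφ⟩ := hsat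
      obtain ⟨v', hRv', hvv'⟩ := hS.zig n (le_refl n) w w' hww' v hRv
      refine ⟨v', N.R_ext n (Nat.le_add_right n k) w' u v' v' hagree
        (agreeUpTo_refl _ _) hRv', ?_⟩
      exact preservation_aux M N Srel hS φ hstrict hpos v v' hvv' hφ v'
        (agreeUpTo_refl _ _)

/-- **Preservation under layered refinement.**  Let `M` be an `n`-layered
model and `N` an `(n+k)`-layered model over an `(n+k)`-layered signature whose
`n`-restriction is the signature of `M`, and let `N` be a layered refinement
of `M`, witnessed by a total `n`-layered simulation `S` from `M` to the
`n`-restriction `N_n`.  Then for every positive strict formula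
`φ ∈ SFm⁺(n,Δⁿ)`, every pair of tuples related by `S` and all choices of
components `w_r ∈ W'_r` for `r ∈ {n+1,…,n+k}`:
`M, w_0,…,w_n ⊨_n φ` implies `N, w'_0,…,w'_n, w_{n+1},…,w_{n+k} ⊨_{n+k} φ`. -/
theorem preservation_layered_refinement {n k : ℕ} {S : LSig}
    (M : LModel n S) (N : LModel (n + k) S)
    (Srel : ∀ j, (∀ r, M.W r) → (∀ r, N.W r) → Prop)
    (hS : IsLayeredSim M (N.restrict n (Nat.le_add_right n k)) Srel)
    (htotal : ∀ w, M.D n w → ∃ w', Srel n w w')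
    (φ : LForm S n) (hstrict : φ.Strict) (hpos : φ.Positive)
    (w : ∀ r, M.W r) (w' : ∀ r, N.W r) (hww' : Srel n w w')
    (hsat : LSat M n φ w) :
    ∀ u : ∀ r, N.W r, agreeUpTo n w' u → LSat N n φ u :=
  preservation_aux M N Srel hS φ hstrict hpos w w' hww' hsat
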